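/- arXiv:1308.1500 — 6 statements merged into one kernel-verified Lean document; each statement's English description precedes it below -/
import Mathlib

section
/- Let G be a group, U ⊆ G a subset containing representatives so that G ⊆ U^m for some m ∈ ℕ, and set η = sqrt(1 − 1/(4(m+1)²)). If (π, H) is a unitary representation of G with no nonzero G-fixed vectors, then for every nonzero ξ ∈ H there exists u ∈ U with ‖(ξ + π(u)ξ)/2‖ < η‖ξ‖. -/
/-!
If `‖(ξ + π u ξ)/2‖ ≥ η‖ξ‖` for every `u ∈ U`, the parallelogram law gives
`‖ξ - π u ξ‖ ≤ ‖ξ‖/(m+1)`, so every `g ∈ U ^ m = G` moves `ξ` by at most `m‖ξ‖/(m+1) < ‖ξ‖`.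
The closed convex hull of the orbit of `ξ` is then a `G`-invariant closed convex set missing `0`;
its unique point of minimal norm is a nonzero `G`-fixed vector.
-/

open Pointwise Set

theorem norm_sub_le_of_sqrt_mul_le_norm_add {𝕜 E : Type*} [RCLike 𝕜] [NormedAddCommGroup E]
    [InnerProductSpace 𝕜 E] {x y : E} {c : ℝ} (hc : 0 ≤ c) (hxy : ‖y‖ = ‖x‖)
    (h : √(1 - c ^ 2 / 4) * ‖x‖ ≤ ‖x + y‖ / 2) : ‖x - y‖ ≤ c * ‖x‖ := by
  have hpar := parallelogram_law_with_norm 𝕜 x y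
  have hsq : (1 - c ^ 2 / 4) * ‖x‖ ^ 2 ≤ (‖x + y‖ / 2) ^ 2 :=
    calc (1 - c ^ 2 / 4) * ‖x‖ ^ 2 ≤ (√(1 - c ^ 2 / 4) * ‖x‖) ^ 2 := by
          rw [mul_pow, Real.sq_sqrt']; gcongr; exact le_max_left _ _
      _ ≤ (‖x + y‖ / 2) ^ 2 := by gcongr
  refine le_of_abs_le (abs_le_of_sq_le_sq ?_ (by positivity))
  rw [hxy] at hpar
  nlinarith

theorem dist_apply_le_of_mem_pow {G R E : Type*} [Monoid G] [Semiring R]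
    [SeminormedAddCommGroup E] [Module R E] (π : G →* (E ≃ₗᵢ[R] E)) {U : Set G} {x : E} {c : ℝ}
    (hU : ∀ u ∈ U, dist (π u x) x ≤ c) {n : ℕ} {g : G} (hg : g ∈ U ^ n) :
    dist (π g x) x ≤ n * c := by
  induction n generalizing g with
  | zero =>
    obtain rfl : g = 1 := hg
    simp
  | succ n ih =>
    obtain ⟨a, ha, b, hb, rfl⟩ := mem_mul.mp (pow_succ U n ▸ hg)
    calc dist (π (a * b) x) x ≤ dist (π a (π b x)) (π a x) + dist (π a x) x := by
          rw [map_mul]; exact dist_triangle _ _ _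
      _ = dist (π b x) x + dist (π a x) x := by rw [LinearIsometryEquiv.dist_map]
      _ ≤ c + n * c := add_le_add (hU b hb) (ih ha)
      _ = (n + 1 : ℕ) * c := by push_cast; ring

theorem mapsTo_closedConvexHull {𝕜 E F : Type*} [Field 𝕜] [LinearOrder 𝕜] [IsStrictOrderedRing 𝕜]
    [AddCommGroup E] [Module 𝕜 E] [TopologicalSpace E]
    [AddCommGroup F] [Module 𝕜 F] [TopologicalSpace F]
    {s : Set E} {t : Set F} {f : E →L[𝕜] F} (hf : MapsTo f s t) :
    MapsTo f (closedConvexHull 𝕜 s) (closedConvexHull 𝕜 t) :=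
  closedConvexHull_min (hf.mono_right subset_closedConvexHull)
    (convex_closedConvexHull.linear_preimage f.toLinearMap)
    (isClosed_closedConvexHull.preimage f.continuous)

theorem Convex.exists_mem_forall_apply_eq {F ι : Type*} [NormedAddCommGroup F]
    [InnerProductSpace ℝ F] {C : Set F} (hne : C.Nonempty) (hcomplete : IsComplete C)
    (hconv : Convex ℝ C) (f : ι → F → F) (hmaps : ∀ i, MapsTo (f i) C C)
    (hnorm : ∀ i x, ‖f i x‖ ≤ ‖x‖) : ∃ v ∈ C, ∀ i, f i v = v := by
  obtain ⟨v, hvC, hv⟩ := exists_norm_eq_iInf_of_complete_convex hne hcomplete hconv 0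
  have hbdd : BddBelow (range fun w : C => ‖0 - (w : F)‖) :=
    ⟨0, forall_mem_range.2 fun _ => norm_nonneg _⟩
  have hmin : ∀ w ∈ C, ‖v‖ ≤ ‖w‖ := fun w hw => by
    have := ciInf_le hbdd ⟨w, hw⟩
    rw [← hv] at this
    simpa using this
  refine ⟨v, hvC, fun i => ?_⟩
  have hw : ‖f i v‖ ≤ ‖v‖ := hnorm i v
  have hmid : ‖v‖ ≤ ‖(1 / 2 : ℝ) • (v + f i v)‖ := by
    refine hmin _ ?_
    rw [smul_add]
    exact hconv hvC (hmaps i hvC) (by norm_num) (by norm_num) (by norm_num)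
  rw [norm_smul, Real.norm_of_nonneg (by norm_num)] at hmid
  -- `‖f i v‖ ≤ ‖v‖ ≤ ‖(v + f i v) / 2‖`, which the parallelogram law allows only if `f i v = v`
  have hpar := parallelogram_law_with_norm ℝ v (f i v)
  have : ‖v - f i v‖ ^ 2 ≤ 0 := by nlinarith [norm_nonneg (f i v), norm_nonneg (v + f i v)]
  exact (sub_eq_zero.mp (by simpa using this)).symm

theorem exists_ne_zero_forall_apply_eq_of_dist_le {𝕜 E G : Type*} [RCLike 𝕜]
    [NormedAddCommGroup E] [InnerProductSpace 𝕜 E] [CompleteSpace E] [Monoid G]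
    (π : G →* (E ≃ₗᵢ[𝕜] E)) {ξ : E} {r : ℝ} (horbit : ∀ g, dist (π g ξ) ξ ≤ r) (hr : r < ‖ξ‖) :
    ∃ v ≠ 0, ∀ g, π g v = v := by
  let _ : InnerProductSpace ℝ E := InnerProductSpace.rclikeToReal 𝕜 E
  let T : G → E →L[ℝ] E := fun g => (π g : E →L[𝕜] E).restrictScalars ℝ
  set C := closedConvexHull ℝ (range fun g => π g ξ)
  have hC : C ⊆ Metric.closedBall ξ r :=
    closedConvexHull_min (range_subset_iff.2 horbit) (convex_closedBall ξ r)
      Metric.isClosed_closedBall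
  have hmaps : ∀ g, MapsTo (T g) C C := fun g => mapsTo_closedConvexHull <| by
    rintro _ ⟨h, rfl⟩
    exact ⟨g * h, by simp [T]⟩
  obtain ⟨v, hvC, hfix⟩ := convex_closedConvexHull.exists_mem_forall_apply_eq
    ((range_nonempty _).mono subset_closedConvexHull) isClosed_closedConvexHull.isComplete
    (fun g => T g) hmaps (fun g x => by simp [T])
  refine ⟨v, ?_, hfix⟩
  rintro rfl
  have := hC hvC
  rw [Metric.mem_closedBall, dist_zero_left] at this
  linarith

/-- Olshanski's Lemma: if `G ⊆ U ^ m` and the unitary representation `π` of `G` on a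
complex Hilbert space has no nonzero fixed vector, then for every nonzero `ξ` there is
`u ∈ U` with `‖(ξ + π(u)ξ)/2‖ < η‖ξ‖`, where `η = √(1 - 1/(4(m+1)²))`. -/
theorem stmt_3 {G : Type*} [Group G] {H : Type*} [NormedAddCommGroup H]
    [InnerProductSpace ℂ H] [CompleteSpace H]
    (π : G →* (H ≃ₗᵢ[ℂ] H)) (U : Set G) (m : ℕ)
    (hU : (Set.univ : Set G) ⊆ U ^ m)
    (hfix : ∀ v : H, (∀ g : G, π g v = v) → v = 0)
    (ξ : H) (hξ : ξ ≠ 0) :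
    ∃ u ∈ U, ‖(1 / 2 : ℝ) • (ξ + π u ξ)‖ <
      Real.sqrt (1 - 1 / (4 * ((m : ℝ) + 1) ^ 2)) * ‖ξ‖ := by
  by_contra! hfar
  have hM : (0 : ℝ) < m + 1 := by positivity
  have hstep : ∀ u ∈ U, dist (π u ξ) ξ ≤ (m + 1 : ℝ)⁻¹ * ‖ξ‖ := fun u hu => by
    rw [dist_comm, dist_eq_norm]
    refine norm_sub_le_of_sqrt_mul_le_norm_add (𝕜 := ℂ) (by positivity) ((π u).norm_map ξ) ?_
    calc √(1 - (m + 1 : ℝ)⁻¹ ^ 2 / 4) * ‖ξ‖ = √(1 - 1 / (4 * ((m : ℝ) + 1) ^ 2)) * ‖ξ‖ := by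
          rw [show (m + 1 : ℝ)⁻¹ ^ 2 / 4 = 1 / (4 * (m + 1) ^ 2) by field_simp]
      _ ≤ ‖(1 / 2 : ℝ) • (ξ + π u ξ)‖ := hfar u hu
      _ = ‖ξ + π u ξ‖ / 2 := by rw [norm_smul, Real.norm_of_nonneg (by norm_num)]; ring
  have hr : m * ((m + 1 : ℝ)⁻¹ * ‖ξ‖) < ‖ξ‖ := by
    rw [← mul_assoc, ← div_eq_mul_inv, div_mul_eq_mul_div, div_lt_iff₀ hM]
    nlinarith [norm_pos_iff.mpr hξ]
  obtain ⟨v, hv, hvfix⟩ := exists_ne_zero_forall_apply_eq_of_dist_le π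
    (fun g => dist_apply_le_of_mem_pow π hstep (hU (mem_univ g))) hr
  exact hv (hfix v hvfix)
end

section
/- Let (π, H) be a unitary representation of a group G and suppose G ⊆ U^m for a subset U ⊆ G. If for some λ < 1/m we have ‖ξ − π(u)ξ‖ ≤ λ‖ξ‖ for all u ∈ U, where ξ ≠ 0, then H^G ≠ {0}. -/
open Pointwise
open scoped InnerProductSpace

set_option maxHeartbeats 1000000 in
/-- If `G ⊆ U ^ m` and some nonzero `ξ` satisfies `‖ξ - π(u)ξ‖ ≤ λ‖ξ‖` for all `u ∈ U`
with `λ < 1/m`, then the unitary representation `(π, H)` has a nonzero fixed vector. -/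
theorem stmt_4 {G : Type*} [Group G] {H : Type*} [NormedAddCommGroup H]
    [InnerProductSpace ℂ H] [CompleteSpace H]
    (π : G →* (H ≃ₗᵢ[ℂ] H)) (U : Set G) (m : ℕ)
    (hU : (Set.univ : Set G) ⊆ U ^ m)
    (lam : ℝ) (hlam : lam < 1 / (m : ℝ))
    (ξ : H) (hξ : ξ ≠ 0)
    (hsmall : ∀ u ∈ U, ‖ξ - π u ξ‖ ≤ lam * ‖ξ‖) :
    ∃ v : H, v ≠ 0 ∧ ∀ g : G, π g v = v := by
  classical
  letI : InnerProductSpace ℝ H := InnerProductSpace.complexToReal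
  set S : Set H := Set.range (fun g => π g ξ) with hSdef
  set K : Set H := closure (convexHull ℝ S) with hKdef
  have hξS : ξ ∈ S := ⟨1, by simp⟩
  -- distance bound on the orbit
  have hbound : ∀ n : ℕ, ∀ g ∈ U ^ n, ‖ξ - π g ξ‖ ≤ (n : ℝ) * lam * ‖ξ‖ := by
    intro n
    induction n with
    | zero =>
      intro g hg
      rw [pow_zero, Set.mem_one] at hg
      subst hg
      simp
    | succ n ih =>
      intro g hg
      rw [pow_succ] at hg
      obtain ⟨a, ha, b, hb, rfl⟩ := hg
      have h1 : ‖ξ - π (a * b) ξ‖ ≤ ‖ξ - π a ξ‖ + ‖π a ξ - π (a * b) ξ‖ :=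
        norm_sub_le_norm_sub_add_norm_sub _ _ _
      have h2 : ‖π a ξ - π (a * b) ξ‖ = ‖ξ - π b ξ‖ := by
        rw [map_mul]
        have : π a ξ - (π a) ((π b) ξ) = π a (ξ - π b ξ) := by
          simp [map_sub]
        rw [show ((π a) * (π b)) ξ = (π a) ((π b) ξ) from rfl, this,
          (π a).norm_map]
      have h3 := ih a ha
      have h4 := hsmall b hb
      have : ‖ξ - π (a * b) ξ‖ ≤ (n : ℝ) * lam * ‖ξ‖ + lam * ‖ξ‖ := by
        rw [h2] at h1; linarith
      push_cast
      linarith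
  have hr : (m : ℝ) * lam < 1 := by
    rcases Nat.eq_zero_or_pos m with hm | hm
    · simp [hm]
    · have hm' : (0 : ℝ) < m := by exact_mod_cast hm
      have := mul_lt_mul_of_pos_left hlam hm'
      rwa [mul_one_div, div_self hm'.ne'] at this
  have hξpos : (0 : ℝ) < ‖ξ‖ := norm_pos_iff.mpr hξ
  -- the orbit lies in a closed ball avoiding 0
  have hSball : S ⊆ Metric.closedBall ξ ((m : ℝ) * lam * ‖ξ‖) := by
    rintro _ ⟨g, rfl⟩
    have := hbound m g (hU (Set.mem_univ g))
    rw [Metric.mem_closedBall, dist_eq_norm, ← norm_sub_rev]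
    exact this
  have hKball : K ⊆ Metric.closedBall ξ ((m : ℝ) * lam * ‖ξ‖) :=
    closure_minimal (convexHull_min hSball (convex_closedBall _ _))
      Metric.isClosed_closedBall
  -- minimizer of norm over K
  have hKne : K.Nonempty := ⟨ξ, subset_closure (subset_convexHull ℝ S hξS)⟩
  have hKconv : Convex ℝ K := (convex_convexHull ℝ S).closure
  have hKcomp : IsComplete K := isClosed_closure.isComplete
  obtain ⟨v, hvK, hv⟩ := exists_norm_eq_iInf_of_complete_convex hKne hKcomp hKconv 0
  have hchar := (norm_eq_iInf_iff_real_inner_le_zero hKconv hvK).mp hv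
  -- v ≠ 0
  have hvball := hKball hvK
  rw [Metric.mem_closedBall, dist_eq_norm] at hvball
  have hvnorm : 0 < ‖v‖ := by
    have h5 : ‖ξ‖ ≤ ‖ξ - v‖ + ‖v‖ := by simpa using norm_add_le (ξ - v) v
    rw [← norm_sub_rev v ξ] at h5
    nlinarith
  have hvne : v ≠ 0 := norm_pos_iff.mp hvnorm
  refine ⟨v, hvne, fun g => ?_⟩
  -- π g maps K to K
  have hgK : π g v ∈ K := by
    have hfS : (fun x => π g x) '' S = S := by
      ext x
      constructor
      · rintro ⟨_, ⟨h, rfl⟩, rfl⟩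
        exact ⟨g * h, by simp [map_mul]⟩
      · rintro ⟨h, rfl⟩
        refine ⟨π (g⁻¹ * h) ξ, ⟨g⁻¹ * h, rfl⟩, ?_⟩
        show (π g) ((π (g⁻¹ * h)) ξ) = (π h) ξ
        have hmul : π g * π (g⁻¹ * h) = π h := by rw [← map_mul, mul_inv_cancel_left]
        calc (π g) ((π (g⁻¹ * h)) ξ) = (π g * π (g⁻¹ * h)) ξ := rfl
          _ = (π h) ξ := by rw [hmul]
    have hlin : IsLinearMap ℝ (fun x : H => π g x) := by
      refine ⟨fun x y => map_add _ _ _, fun c x => ?_⟩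
      exact (π g).toLinearEquiv.map_smul_of_tower c x
    have h6 : (fun x => π g x) '' K = K := by
      have e1 : (fun x => π g x) '' K = closure ((fun x => π g x) '' (convexHull ℝ S)) := by
        simpa using ((π g).toHomeomorph.image_closure (convexHull ℝ S))
      rw [e1, hlin.image_convexHull, hfS]
    rw [← h6]
    exact ⟨v, hvK, rfl⟩
  -- use the variational characterization
  have h7 := hchar (π g v) hgK
  rw [zero_sub, inner_neg_left, neg_nonpos] at h7
  rw [inner_sub_right, real_inner_self_eq_norm_sq, sub_nonneg] at h7
  have h8 : ‖π g v - v‖ ^ 2 = 0 := by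
    have := norm_sub_sq_real (π g v) v
    have hnv : ‖π g v‖ = ‖v‖ := (π g).norm_map v
    have hsym : ⟪(π g v : H), v⟫_ℝ = ⟪v, (π g v : H)⟫_ℝ := real_inner_comm _ _
    nlinarith [sq_nonneg ‖π g v - v‖]
  have := pow_eq_zero_iff (n := 2) (by norm_num) |>.mp h8
  rw [norm_eq_zero, sub_eq_zero] at this
  exact this
end

section
/- A unitary representation (π, H) of a group K is tame (i.e., the union of the fixed spaces H^{K_j} is dense in H) if and only if π is continuous with respect to the group topology on K for which (K_j)_{j∈J} is a basis of identity neighborhoods. -/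
/-!
Tame ⇒ continuous: a vector fixed by `K_j`, an open subgroup, has a locally constant orbit
map, and since `π` acts by isometries the vectors with continuous orbit map form a closed set.

Continuous ⇒ tame: if the `K_j`-orbit of `v` stays within `ε` of `v`, the closed convex hull
of that orbit is `K_j`-invariant and lies within `ε` of `v`; its point of minimal norm is
unique, hence fixed by `K_j` (the Bruhat–Tits fixed point argument).
-/

open Set Metric Filter Topology

theorem Equicontinuous.isClosed_setOf_continuous {ι X α : Type*} [TopologicalSpace ι]
    [TopologicalSpace X] [UniformSpace α] {F : ι → X → α} (hF : Equicontinuous F) :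
    IsClosed {x | Continuous fun i => F i x} :=
  (UniformFun.isClosed_setOfPred_continuous ι).preimage (equicontinuous_iff_continuous.1 hF)

theorem continuous_of_forall_mul_mem_eq {G X : Type*} [Group G] [TopologicalSpace G]
    [IsTopologicalGroup G] [TopologicalSpace X] {S : Subgroup G} (hS : (S : Set G) ∈ 𝓝 1)
    {f : G → X} (hf : ∀ g, ∀ k ∈ S, f (g * k) = f g) : Continuous f := by
  refine ((IsLocallyConstant.iff_eventually_eq f).2 fun g => ?_).continuous
  rw [← map_mul_left_nhds_one, eventually_map]
  filter_upwards [hS] with k hk using hf g k hk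

theorem Set.MapsTo.closedConvexHull {𝕜 E F : Type*} [Field 𝕜] [LinearOrder 𝕜]
    [IsStrictOrderedRing 𝕜] [AddCommGroup E] [Module 𝕜 E] [TopologicalSpace E]
    [AddCommGroup F] [Module 𝕜 F] [TopologicalSpace F] {f : E →L[𝕜] F} {s : Set E} {t : Set F}
    (h : MapsTo f s t) : MapsTo f (closedConvexHull 𝕜 s) (closedConvexHull 𝕜 t) :=
  closedConvexHull_min (fun _ hx => subset_closedConvexHull (h hx))
    (convex_closedConvexHull.linear_preimage f.toLinearMap)
    (isClosed_closedConvexHull.preimage f.continuous)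

theorem exists_mem_forall_eq_of_mapsTo_of_norm_eq {E : Type*} [NormedAddCommGroup E]
    [InnerProductSpace ℝ E] {C : Set E} (hne : C.Nonempty) (hC : IsComplete C)
    (hconv : Convex ℝ C) {ι : Type*} (T : ι → E → E) (hmaps : ∀ i, MapsTo (T i) C C)
    (hnorm : ∀ i x, ‖T i x‖ = ‖x‖) : ∃ w ∈ C, ∀ i, T i w = w := by
  obtain ⟨w, hwC, hw⟩ := exists_norm_eq_iInf_of_complete_convex hne hC hconv 0
  simp only [zero_sub, norm_neg] at hw
  have hmin : ∀ y ∈ C, ‖w‖ ≤ ‖y‖ := fun y hy =>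
    hw ▸ ciInf_le ⟨0, forall_mem_range.2 fun z : C => norm_nonneg (z : E)⟩ ⟨y, hy⟩
  refine ⟨w, hwC, fun i => by_contra fun hne => ?_⟩
  -- the midpoint of two distinct vectors of equal norm is strictly shorter
  have hmid : (1 / 2 : ℝ) • (T i w + w) ∈ C := by
    simpa [smul_add, add_comm (1 / 2 : ℝ)] using
      hconv (hmaps i hwC) hwC (by norm_num : (0 : ℝ) ≤ 1 / 2) (by norm_num : (0 : ℝ) ≤ 1 / 2)
        (by norm_num)
  have := (norm_midpoint_lt_iff (hnorm i w)).2 hne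
  rw [hnorm] at this
  exact (hmin _ hmid).not_gt this

theorem exists_fixed_mem_closedBall_of_forall_mem_closedBall {G H : Type*} [Group G]
    [NormedAddCommGroup H] [InnerProductSpace ℂ H] [CompleteSpace H] (π : G →* (H ≃ₗᵢ[ℂ] H))
    (S : Subgroup G) {v : H} {ε : ℝ} (hv : ∀ g ∈ S, π g v ∈ closedBall v ε) :
    ∃ w ∈ closedBall v ε, ∀ g ∈ S, π g w = w := by
  let _ : InnerProductSpace ℝ H := InnerProductSpace.complexToReal
  set C := closedConvexHull ℝ ((fun g => π g v) '' S)
  have hvC : v ∈ C := by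
    simpa using subset_closedConvexHull (mem_image_of_mem (fun g => π g v) (one_mem S))
  have hCsub : C ⊆ closedBall v ε :=
    closedConvexHull_min (image_subset_iff.2 hv) (convex_closedBall v ε) isClosed_closedBall
  have hmaps (k : S) : MapsTo (π k) C C :=
    MapsTo.closedConvexHull (f := ((π k : H →L[ℂ] H).restrictScalars ℝ)) <| by
      rintro _ ⟨g, hg, rfl⟩
      exact ⟨k * g, mul_mem k.2 hg, by simp⟩
  obtain ⟨w, hwC, hw⟩ := exists_mem_forall_eq_of_mapsTo_of_norm_eq
    ⟨v, hvC⟩ isClosed_closedConvexHull.isComplete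
    convex_closedConvexHull (fun k : S => π k) hmaps fun k => (π k).norm_map
  exact ⟨w, hCsub hwC, fun g hg => hw ⟨g, hg⟩⟩

/-- A unitary representation `(π, H)` of `K` is tame (the union of the fixed spaces
`H^{K_j}` is dense in `H`) if and only if it is continuous with respect to the group
topology on `K` for which the subgroups `(K_j)` form a basis of identity
neighborhoods. -/
theorem stmt_6 {K : Type*} [Group K] [TopologicalSpace K] [IsTopologicalGroup K]
    {H : Type*} [NormedAddCommGroup H] [InnerProductSpace ℂ H] [CompleteSpace H]
    {J : Type*} (Ksub : J → Subgroup K)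
    (hbasis : (nhds (1 : K)).HasBasis (fun _ : J => True) (fun j => (Ksub j : Set K)))
    (π : K →* (H ≃ₗᵢ[ℂ] H)) :
    Dense (⋃ j : J, {v : H | ∀ g ∈ Ksub j, π g v = v}) ↔
      ∀ v : H, Continuous fun g : K => π g v := by
  refine ⟨fun hdense v => ?_, fun hcont => Metric.dense_iff.2 fun v r hr => ?_⟩
  · have hclosed : IsClosed {v : H | Continuous fun g : K => π g v} :=
      (LipschitzWith.uniformEquicontinuous (fun g v => π g v) 1 fun g => (π g).lipschitz)
        |>.equicontinuous.isClosed_setOf_continuous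
    refine hclosed.closure_subset_iff.2 (iUnion_subset fun j w hw => ?_) (hdense v)
    exact continuous_of_forall_mul_mem_eq (hbasis.mem_of_mem (i := j) trivial) fun g k hk => by
      simp [hw k hk]
  · have hnear : (fun g => π g v) ⁻¹' closedBall v (r / 2) ∈ 𝓝 1 :=
      (hcont v).continuousAt.preimage_mem_nhds (by simpa using closedBall_mem_nhds v (half_pos hr))
    obtain ⟨j, -, hj⟩ := hbasis.mem_iff.1 hnear
    obtain ⟨w, hwv, hw⟩ := exists_fixed_mem_closedBall_of_forall_mem_closedBall π (Ksub j) hj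
    exact ⟨w, closedBall_subset_ball (half_lt_self hr) hwv, mem_iUnion.2 ⟨j, hw⟩⟩
end

section
/- If g ∈ O(H) for a real Hilbert space H, and g = exp(X) for some X ∈ 𝔬(H), then ker(g + 1) admits an orthogonal complex structure; in particular, if ker(g + 1) is finite-dimensional of odd dimension, then g is not in the image of the exponential map of O(H). -/
/-!
With `X` skew-adjoint, `u = exp (X / 2)` is orthogonal, squares to `g` and hence commutes with `g`,
so it restricts to an isometry `J` of `ker (g + 1)` with `J² = g = -1` there. In finite dimension
`n`, `(det J)² = (-1)ⁿ` forces `n` to be even.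
-/

open NormedSpace Module

theorem even_finrank_of_apply_apply_eq_neg {𝕜 V : Type*} [Field 𝕜] [LinearOrder 𝕜]
    [IsStrictOrderedRing 𝕜] [AddCommGroup V] [Module 𝕜 V] [FiniteDimensional 𝕜 V]
    (f : V →ₗ[𝕜] V) (hf : ∀ v, f (f v) = -v) : Even (finrank 𝕜 V) := by
  have hff : f ∘ₗ f = (-1 : 𝕜) • LinearMap.id := LinearMap.ext fun v => by simp [hf]
  have hdet : f.det * f.det = (-1) ^ finrank 𝕜 V := by
    rw [← LinearMap.det_comp, hff, LinearMap.det_smul, LinearMap.det_id, mul_one]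
  refine Nat.not_odd_iff_even.mp fun hodd => ?_
  rw [hodd.neg_one_pow] at hdet
  nlinarith [mul_self_nonneg f.det]

theorem exists_mem_unitary_mul_self_eq_exp {A : Type*} [NormedRing A] [NormedAlgebra ℝ A]
    [CompleteSpace A] [StarRing A] [ContinuousStar A] [StarModule ℝ A] {x : A}
    (hx : x ∈ skewAdjoint A) : ∃ u ∈ unitary A, u * u = exp x := by
  -- Mathlib states `exp_add_of_commute` for `ℚ`-algebras.
  let : NormedAlgebra ℚ A := .restrictScalars ℚ ℝ A
  refine ⟨exp ((2⁻¹ : ℝ) • x), exp_mem_unitary_of_mem_skewAdjoint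
    (skewAdjoint.smul_mem _ hx), ?_⟩
  rw [← exp_add_of_commute (Commute.refl _), ← add_smul]
  norm_num

theorem LinearEquiv.map_ker_eq_of_commute {R M : Type*} [Ring R] [AddCommGroup M] [Module R M]
    (e : M ≃ₗ[R] M) (T : M →ₗ[R] M) (h : ∀ x, T (e x) = e (T x)) :
    (LinearMap.ker T).map (e : M →ₗ[R] M) = LinearMap.ker T := by
  ext x
  have hsymm : T (e.symm x) = e.symm (T x) := by
    rw [e.eq_symm_apply, ← h, e.apply_symm_apply]
  simp [Submodule.map_equiv_eq_comap_symm, hsymm]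

theorem LinearIsometryEquiv.exists_restrict_ker_of_commute {R E : Type*} [Ring R]
    [SeminormedAddCommGroup E] [Module R E] (e : E ≃ₗᵢ[R] E) (T : E →ₗ[R] E)
    (h : ∀ x, T (e x) = e (T x)) :
    ∃ J : LinearMap.ker T ≃ₗᵢ[R] LinearMap.ker T, ∀ v, (J v : E) = e v :=
  ⟨(e.submoduleMap _).trans (.ofEq _ _ (e.toLinearEquiv.map_ker_eq_of_commute T h)),
    fun _ => rfl⟩

theorem stmt_17_general {H : Type*} [NormedAddCommGroup H] [InnerProductSpace ℝ H]
    [CompleteSpace H]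
    (g : H →L[ℝ] H)
    (X : H →L[ℝ] H) (hX : star X = -X) (hexp : g = NormedSpace.exp X) :
    (∃ J : (LinearMap.ker ((g + 1 : H →L[ℝ] H) : H →ₗ[ℝ] H)) ≃ₗᵢ[ℝ] (LinearMap.ker ((g + 1 : H →L[ℝ] H) : H →ₗ[ℝ] H)),
        ∀ v, J (J v) = -v) ∧
    (FiniteDimensional ℝ (LinearMap.ker ((g + 1 : H →L[ℝ] H) : H →ₗ[ℝ] H)) →
      ¬ Odd (Module.finrank ℝ (LinearMap.ker ((g + 1 : H →L[ℝ] H) : H →ₗ[ℝ] H)))) := by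
  obtain ⟨u, hu, huu⟩ := exists_mem_unitary_mul_self_eq_exp (x := X) (skewAdjoint.mem_iff.mpr hX)
  rw [← hexp] at huu
  have hug : ∀ x, u (g x) = g (u x) := fun x => by rw [← huu]; rfl
  obtain ⟨J, hJ⟩ : ∃ J : LinearMap.ker ((g + 1 : H →L[ℝ] H) : H →ₗ[ℝ] H) ≃ₗᵢ[ℝ]
      LinearMap.ker ((g + 1 : H →L[ℝ] H) : H →ₗ[ℝ] H), ∀ v, (J v : H) = u v :=
    (Unitary.linearIsometryEquiv ⟨u, hu⟩).exists_restrict_ker_of_commute _ fun x =>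
      show g (u x) + u x = u (g x + x) by rw [map_add, hug]
  have hJJ : ∀ v, J (J v) = -v := fun v => by
    ext
    rw [hJ, hJ, Submodule.coe_neg]
    exact (DFunLike.congr_fun huu (v : H)).trans (eq_neg_of_add_eq_zero_left v.2)
  exact ⟨⟨J, hJJ⟩, fun _ =>
    Nat.not_odd_iff_even.mpr (even_finrank_of_apply_apply_eq_neg J.toLinearMap hJJ)⟩

/-- If `g ∈ O(H)` (real Hilbert space) satisfies `g = exp X` with `X` skew-symmetric,
then `ker(g + 1)` carries an orthogonal complex structure; in particular, if
`ker(g + 1)` is finite-dimensional, its dimension is not odd. -/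
theorem stmt_17 {H : Type*} [NormedAddCommGroup H] [InnerProductSpace ℝ H]
    [CompleteSpace H]
    (g : H →L[ℝ] H) (hg : g ∈ unitary (H →L[ℝ] H))
    (X : H →L[ℝ] H) (hX : star X = -X) (hexp : g = NormedSpace.exp X) :
    (∃ J : (LinearMap.ker ((g + 1 : H →L[ℝ] H) : H →ₗ[ℝ] H)) ≃ₗᵢ[ℝ] (LinearMap.ker ((g + 1 : H →L[ℝ] H) : H →ₗ[ℝ] H)),
        ∀ v, J (J v) = -v) ∧
    (FiniteDimensional ℝ (LinearMap.ker ((g + 1 : H →L[ℝ] H) : H →ₗ[ℝ] H)) →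
      ¬ Odd (Module.finrank ℝ (LinearMap.ker ((g + 1 : H →L[ℝ] H) : H →ₗ[ℝ] H)))) :=
  stmt_17_general g X hX hexp
end

section
/- Let ρ : C(n,ℂ) → B(V) be a continuous *-representation by contractions of the semigroup of n×n complex contraction matrices, with ρ(1) = 1, such that ρ(r·1) is invertible for all 0 < r ≤ 1. Then ρ extends uniquely to a continuous *-representation ρ̂ of the multiplicative semigroup (M(n,ℂ), ·) on V via ρ̂(rM) = ρ(r⁻¹·1)⁻¹ ρ(M) for r > 1 and M ∈ C(n,ℂ). -/
/-- Auxiliary extension function: `gExt ρ a t = ρ(t•1)⁻¹ * ρ(t•a)`. -/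
noncomputable def gExt {A B : Type*} [NormedRing A] [NormedAlgebra ℂ A] [Ring B]
    (ρ : A → B) (a : A) (t : ℝ) : B :=
  Ring.inverse (ρ ((t : ℂ) • 1)) * ρ ((t : ℂ) • a)

theorem stmt18_aux {A B : Type*} [NormedRing A] [NormedAlgebra ℂ A] [StarRing A]
    [NormedStarGroup A] [StarModule ℂ A] [NormedRing B] [StarRing B]
    (hA1 : ‖(1 : A)‖ ≤ 1)
    (ρ : A → B)
    (hmul : ∀ a b, ‖a‖ ≤ 1 → ‖b‖ ≤ 1 → ρ (a * b) = ρ a * ρ b)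
    (hstar : ∀ a, ‖a‖ ≤ 1 → ρ (star a) = star (ρ a))
    (hcont : ContinuousOn ρ {a | ‖a‖ ≤ 1})
    (hinv : ∀ r : ℝ, 0 < r → r ≤ 1 → IsUnit (ρ ((r : ℂ) • 1))) :
    ∃! ρhat : A → B,
      (∀ a, ‖a‖ ≤ 1 → ρhat a = ρ a) ∧
      (∀ a b, ρhat (a * b) = ρhat a * ρhat b) ∧
      (∀ a, ρhat (star a) = star (ρhat a)) ∧
      Continuous ρhat := by
  classical
  have hns : ∀ (t : ℝ) (a : A), 0 ≤ t → ‖(t : ℂ) • a‖ = t * ‖a‖ := by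
    intro t a ht
    rw [norm_smul, Complex.norm_real, Real.norm_eq_abs, abs_of_nonneg ht]
  have hn1 : ∀ t : ℝ, 0 ≤ t → t ≤ 1 → ‖(t : ℂ) • (1 : A)‖ ≤ 1 := by
    intro t ht ht1
    rw [hns t 1 ht]
    nlinarith [norm_nonneg (1 : A)]
  have hscal : ∀ (t : ℝ) (a : A), 0 < t → t ≤ 1 → ‖a‖ ≤ 1 →
      ρ ((t : ℂ) • a) = ρ ((t : ℂ) • 1) * ρ a := by
    intro t a ht ht1 ha
    rw [← hmul _ _ (hn1 t ht.le ht1) ha]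
    congr 1
    rw [smul_mul_assoc, one_mul]
  have hcent : ∀ (t : ℝ) (a : A), 0 < t → t ≤ 1 → ‖a‖ ≤ 1 →
      ρ ((t : ℂ) • 1) * ρ a = ρ a * ρ ((t : ℂ) • 1) := by
    intro t a ht ht1 ha
    rw [← hmul _ _ (hn1 t ht.le ht1) ha, ← hmul _ _ ha (hn1 t ht.le ht1)]
    congr 1
    rw [smul_mul_assoc, one_mul, mul_smul_comm, mul_one]
  have hcinv : ∀ x y : B, IsUnit y → x * y = y * x →
      x * Ring.inverse y = Ring.inverse y * x := by
    intro x y hy h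
    obtain ⟨u, rfl⟩ := hy
    rw [Ring.inverse_unit]
    exact (Commute.units_inv_right h)
  -- well-definedness
  have hwd : ∀ (a : A) (t s : ℝ), 0 < t → t ≤ 1 → t * ‖a‖ ≤ 1 →
      0 < s → s ≤ 1 → s * ‖a‖ ≤ 1 → gExt ρ a t = gExt ρ a s := by
    intro a t s ht ht1 hta hs hs1 hsa
    have hnta : ‖(t : ℂ) • a‖ ≤ 1 := by rw [hns t a ht.le]; exact hta
    have hnsa : ‖(s : ℂ) • a‖ ≤ 1 := by rw [hns s a hs.le]; exact hsa
    have hut := hinv t ht ht1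
    have hus := hinv s hs hs1
    have key : ρ ((t : ℂ) • 1) * ρ ((s : ℂ) • a) = ρ ((s : ℂ) • 1) * ρ ((t : ℂ) • a) := by
      rw [← hscal t _ ht ht1 hnsa, ← hscal s _ hs hs1 hnta, smul_smul, smul_smul]
      norm_cast
      rw [mul_comm]
    have hco : ρ ((t : ℂ) • 1) * ρ ((s : ℂ) • 1) = ρ ((s : ℂ) • 1) * ρ ((t : ℂ) • 1) :=
      hcent t _ ht ht1 (hn1 s hs.le hs1)
    have h1 : ρ ((t : ℂ) • 1) * gExt ρ a s = ρ ((t : ℂ) • a) := by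
      unfold gExt
      calc ρ ((t : ℂ) • 1) * (Ring.inverse (ρ ((s : ℂ) • 1)) * ρ ((s : ℂ) • a))
          = (ρ ((t : ℂ) • 1) * Ring.inverse (ρ ((s : ℂ) • 1))) * ρ ((s : ℂ) • a) := by
            rw [mul_assoc]
        _ = (Ring.inverse (ρ ((s : ℂ) • 1)) * ρ ((t : ℂ) • 1)) * ρ ((s : ℂ) • a) := by
            rw [hcinv _ _ hus hco]
        _ = Ring.inverse (ρ ((s : ℂ) • 1)) * (ρ ((s : ℂ) • 1) * ρ ((t : ℂ) • a)) := by
            rw [mul_assoc, key]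
        _ = ρ ((t : ℂ) • a) := Ring.inverse_mul_cancel_left _ _ hus
    have h2 : Ring.inverse (ρ ((t : ℂ) • 1)) * (ρ ((t : ℂ) • 1) * gExt ρ a s) = gExt ρ a s :=
      Ring.inverse_mul_cancel_left _ _ hut
    rw [h1] at h2
    unfold gExt at h2 ⊢
    exact h2
  have hext : ∀ (a : A) (t : ℝ), 0 < t → t ≤ 1 → ‖a‖ ≤ 1 → gExt ρ a t = ρ a := by
    intro a t ht ht1 ha
    unfold gExt
    rw [hscal t a ht ht1 ha, ← mul_assoc,
      Ring.inverse_mul_cancel _ (hinv t ht ht1), one_mul]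
  set ρhat : A → B := fun a => gExt ρ a (‖a‖ + 1)⁻¹ with hρhat
  have hbase : ∀ a : A, 0 < (‖a‖ + 1)⁻¹ ∧ (‖a‖ + 1)⁻¹ ≤ 1 ∧ (‖a‖ + 1)⁻¹ * ‖a‖ ≤ 1 := by
    intro a
    have h0 : (0:ℝ) < ‖a‖ + 1 := by positivity
    refine ⟨by positivity, ?_, ?_⟩
    · rw [inv_le_one_iff₀]; right; nlinarith [norm_nonneg a]
    · rw [inv_mul_le_iff₀ h0]; nlinarith [norm_nonneg a]
  have hρg : ∀ (a : A) (t : ℝ), 0 < t → t ≤ 1 → t * ‖a‖ ≤ 1 → ρhat a = gExt ρ a t := by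
    intro a t ht ht1 hta
    obtain ⟨h1, h2, h3⟩ := hbase a
    exact hwd a _ t h1 h2 h3 ht ht1 hta
  have P1 : ∀ a, ‖a‖ ≤ 1 → ρhat a = ρ a := by
    intro a ha
    obtain ⟨h1, h2, _⟩ := hbase a
    exact hext a _ h1 h2 ha
  have P2 : ∀ a b, ρhat (a * b) = ρhat a * ρhat b := by
    intro a b
    set t := (‖a‖ + 1)⁻¹ with htdef
    set s := (‖b‖ + 1)⁻¹ with hsdef
    obtain ⟨ht, ht1, hta⟩ := hbase a
    obtain ⟨hs, hs1, hsb⟩ := hbase b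
    have hts : 0 < t * s := mul_pos ht hs
    have hts1 : t * s ≤ 1 := by nlinarith
    have htsab : (t * s) * ‖a * b‖ ≤ 1 := by
      have hab : ‖a * b‖ ≤ ‖a‖ * ‖b‖ := norm_mul_le a b
      have k1 : t * s * ‖a * b‖ ≤ t * s * (‖a‖ * ‖b‖) :=
        mul_le_mul_of_nonneg_left hab (by positivity)
      have k2 : t * s * (‖a‖ * ‖b‖) = (t * ‖a‖) * (s * ‖b‖) := by ring
      have k3 : (t * ‖a‖) * (s * ‖b‖) ≤ 1 := by
        nlinarith [mul_nonneg ht.le (norm_nonneg a), mul_nonneg hs.le (norm_nonneg b)]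
      linarith
    have hnta : ‖(t : ℂ) • a‖ ≤ 1 := by rw [hns t a ht.le]; exact hta
    have hnsb : ‖(s : ℂ) • b‖ ≤ 1 := by rw [hns s b hs.le]; exact hsb
    have hut := hinv t ht ht1
    have hus := hinv s hs hs1
    rw [hρg (a * b) (t * s) hts hts1 htsab, hρg a t ht ht1 hta, hρg b s hs hs1 hsb]
    unfold gExt
    have ec : ((t * s : ℝ) : ℂ) = (t : ℂ) * (s : ℂ) := by push_cast; ring
    have e1 : ((t * s : ℝ) : ℂ) • (a * b) = ((t : ℂ) • a) * ((s : ℂ) • b) := by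
      rw [smul_mul_smul_comm, ec]
    have e2 : ((t * s : ℝ) : ℂ) • (1 : A) = ((t : ℂ) • 1) * ((s : ℂ) • 1) := by
      rw [smul_mul_smul_comm, mul_one, ec]
    rw [e1, e2, hmul _ _ hnta hnsb, hmul _ _ (hn1 t ht.le ht1) (hn1 s hs.le hs1)]
    set ut := ρ ((t : ℂ) • 1)
    set us := ρ ((s : ℂ) • 1)
    set X := ρ ((t : ℂ) • a)
    set Y := ρ ((s : ℂ) • b)
    have hco : ut * us = us * ut := hcent t _ ht ht1 (hn1 s hs.le hs1)
    have hcoX : us * X = X * us := hcent s _ hs hs1 hnta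
    have huts : IsUnit (ut * us) := hut.mul hus
    have lhs : (ut * us) * (Ring.inverse (ut * us) * (X * Y)) = X * Y :=
      Ring.mul_inverse_cancel_left _ _ huts
    have rhs : (ut * us) * ((Ring.inverse ut * X) * (Ring.inverse us * Y)) = X * Y := by
      have c1 : us * Ring.inverse ut = Ring.inverse ut * us := hcinv us ut hut hco.symm
      have c2 : X * Ring.inverse us = Ring.inverse us * X := hcinv X us hus hcoX.symm
      calc (ut * us) * ((Ring.inverse ut * X) * (Ring.inverse us * Y))
          = ut * ((us * Ring.inverse ut) * (X * (Ring.inverse us * Y))) := by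
            simp only [mul_assoc]
        _ = ut * ((Ring.inverse ut * us) * (X * (Ring.inverse us * Y))) := by rw [c1]
        _ = (ut * Ring.inverse ut) * (us * (X * (Ring.inverse us * Y))) := by
            simp only [mul_assoc]
        _ = us * (X * (Ring.inverse us * Y)) := by
            rw [Ring.mul_inverse_cancel _ hut, one_mul]
        _ = us * ((X * Ring.inverse us) * Y) := by simp only [mul_assoc]
        _ = us * ((Ring.inverse us * X) * Y) := by rw [c2]
        _ = (us * Ring.inverse us) * (X * Y) := by
            simp only [mul_assoc]
        _ = X * Y := by rw [Ring.mul_inverse_cancel _ hus, one_mul]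
    exact huts.mul_left_cancel (lhs.trans rhs.symm)
  have P3 : ∀ a, ρhat (star a) = star (ρhat a) := by
    intro a
    set t := (‖a‖ + 1)⁻¹ with htdef
    obtain ⟨ht, ht1, hta⟩ := hbase a
    have hnta : ‖(t : ℂ) • a‖ ≤ 1 := by rw [hns t a ht.le]; exact hta
    have hsta : t * ‖star a‖ ≤ 1 := by rw [norm_star]; exact hta
    have hut := hinv t ht ht1
    rw [hρg (star a) t ht ht1 hsta, hρg a t ht ht1 hta]
    unfold gExt
    have hcast : star ((t : ℝ) : ℂ) = ((t : ℝ) : ℂ) := by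
      rw [Complex.star_def, Complex.conj_ofReal]
    have e1 : (t : ℂ) • star a = star ((t : ℂ) • a) := by
      rw [star_smul, hcast]
    have e2 : star ((t : ℂ) • (1 : A)) = (t : ℂ) • 1 := by
      rw [star_smul, star_one, hcast]
    have hsut : star (ρ ((t : ℂ) • 1)) = ρ ((t : ℂ) • 1) := by
      rw [← hstar _ (hn1 t ht.le ht1), e2]
    have hsA : ρ ((t : ℂ) • star a) = star (ρ ((t : ℂ) • a)) := by
      rw [e1, hstar _ hnta]
    have hstA : ‖star ((t : ℂ) • a)‖ ≤ 1 := by rw [norm_star]; exact hnta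
    have hcoA : ρ ((t : ℂ) • 1) * star (ρ ((t : ℂ) • a)) =
        star (ρ ((t : ℂ) • a)) * ρ ((t : ℂ) • 1) := by
      have := hcent t (star ((t : ℂ) • a)) ht ht1 hstA
      rwa [hstar _ hnta] at this
    have hsinv : star (Ring.inverse (ρ ((t : ℂ) • 1))) = Ring.inverse (ρ ((t : ℂ) • 1)) := by
      set u := ρ ((t : ℂ) • 1)
      have h1 : star (Ring.inverse u) * u = 1 := by
        nth_rewrite 2 [← hsut]
        rw [← star_mul, Ring.mul_inverse_cancel _ hut, star_one]
      calc star (Ring.inverse u) = star (Ring.inverse u) * (u * Ring.inverse u) := by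
            rw [Ring.mul_inverse_cancel _ hut, mul_one]
        _ = (star (Ring.inverse u) * u) * Ring.inverse u := by rw [mul_assoc]
        _ = Ring.inverse u := by rw [h1, one_mul]
    rw [hsA, star_mul, hsinv, hcinv _ _ hut hcoA.symm]
  have P4 : Continuous ρhat := by
    rw [continuous_iff_continuousAt]
    intro a₀
    set t := (‖a₀‖ + 2)⁻¹ with htdef
    have h02 : (0:ℝ) < ‖a₀‖ + 2 := by positivity
    have ht : 0 < t := by positivity
    have ht1 : t ≤ 1 := by
      rw [htdef, inv_le_one_iff₀]; right; nlinarith [norm_nonneg a₀]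
    have hUopen : IsOpen {x : A | ‖x‖ < ‖a₀‖ + 2} :=
      isOpen_Iio.preimage continuous_norm
    have ha₀U : a₀ ∈ {x : A | ‖x‖ < ‖a₀‖ + 2} := by
      simp only [Set.mem_setOf_eq]; nlinarith
    have heq : ∀ x ∈ {x : A | ‖x‖ < ‖a₀‖ + 2}, ρhat x = gExt ρ x t := by
      intro x hx
      have hx' : ‖x‖ < ‖a₀‖ + 2 := hx
      have : t * ‖x‖ ≤ 1 := by
        rw [htdef, inv_mul_le_iff₀ h02]; nlinarith
      exact hρg x t ht ht1 this
    have hgc : ContinuousAt (fun x => gExt ρ x t) a₀ := by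
      unfold gExt
      apply ContinuousAt.mul continuousAt_const
      have hmap : ContinuousAt (fun x : A => (t : ℂ) • x) a₀ :=
        (continuous_const_smul ((t : ℂ))).continuousAt
      have hρc : ContinuousAt ρ ((t : ℂ) • a₀) := by
        apply hcont.continuousAt
        have hmem : Metric.closedBall (0 : A) 1 ∈ nhds ((t : ℂ) • a₀) := by
          apply Metric.closedBall_mem_nhds_of_mem
          rw [mem_ball_zero_iff, hns t a₀ ht.le, htdef, inv_mul_lt_iff₀ h02]
          nlinarith [norm_nonneg a₀]
        have hss : Metric.closedBall (0 : A) 1 ⊆ {a : A | ‖a‖ ≤ 1} := by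
          intro y hy; simpa [mem_closedBall_zero_iff] using hy
        exact Filter.mem_of_superset hmem hss
      exact hρc.comp hmap
    apply hgc.congr
    filter_upwards [hUopen.mem_nhds ha₀U] with x hx
    exact (heq x hx).symm
  refine ⟨ρhat, ⟨P1, P2, P3, P4⟩, ?_⟩
  rintro σ ⟨hσ1, hσ2, hσ3, hσ4⟩
  funext a
  obtain ⟨ht, ht1, hta⟩ := hbase a
  set t := (‖a‖ + 1)⁻¹ with htdef
  have hnta : ‖(t : ℂ) • a‖ ≤ 1 := by rw [hns t a ht.le]; exact hta
  have hut := hinv t ht ht1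
  have h1 : ρ ((t : ℂ) • 1) * σ a = ρ ((t : ℂ) • a) := by
    rw [← hσ1 _ (hn1 t ht.le ht1), ← hσ2, smul_mul_assoc, one_mul, hσ1 _ hnta]
  have h2 : ρ ((t : ℂ) • 1) * ρhat a = ρ ((t : ℂ) • a) := by
    rw [hρg a t ht ht1 hta]
    unfold gExt
    rw [Ring.mul_inverse_cancel_left _ _ hut]
  exact hut.mul_left_cancel (h1.trans h2.symm)

/-- A continuous `*`-representation by contractions `ρ` of the contraction semigroup
`C(n,ℂ)` (realized as contraction operators on `ℂⁿ`) with `ρ(1) = 1`, such that all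
`ρ(r·1)` (`0 < r ≤ 1`) are invertible, extends uniquely to a continuous multiplicative
`*`-representation of the full multiplicative semigroup `(M(n,ℂ), ·)`. -/
theorem stmt_18 {n : ℕ} {V : Type*} [NormedAddCommGroup V] [InnerProductSpace ℂ V]
    [CompleteSpace V]
    (ρ : (EuclideanSpace ℂ (Fin n) →L[ℂ] EuclideanSpace ℂ (Fin n)) → (V →L[ℂ] V))
    (hone : ρ 1 = 1)
    (hmul : ∀ a b, ‖a‖ ≤ 1 → ‖b‖ ≤ 1 → ρ (a * b) = ρ a * ρ b)
    (hstar : ∀ a, ‖a‖ ≤ 1 → ρ (star a) = star (ρ a))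
    (hcontr : ∀ a, ‖a‖ ≤ 1 → ‖ρ a‖ ≤ 1)
    (hcont : ContinuousOn ρ {a | ‖a‖ ≤ 1})
    (hinv : ∀ r : ℝ, 0 < r → r ≤ 1 → IsUnit (ρ ((r : ℂ) • 1))) :
    ∃! ρhat : (EuclideanSpace ℂ (Fin n) →L[ℂ] EuclideanSpace ℂ (Fin n)) → (V →L[ℂ] V),
      (∀ a, ‖a‖ ≤ 1 → ρhat a = ρ a) ∧
      (∀ a b, ρhat (a * b) = ρhat a * ρhat b) ∧
      (∀ a, ρhat (star a) = star (ρhat a)) ∧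
      Continuous ρhat :=
  stmt18_aux ContinuousLinearMap.norm_id_le ρ hmul hstar hcont hinv
end

section
/- Let (π, H) be a unitary representation of a group G, H ⊇ V a closed subspace that generates H as a G-module, P_V the orthogonal projection onto V, and suppose V is invariant under the commutant π(G)'. Then the map γ : π(G)' → B(V), γ(A) = P_V A P_V, is an injective *-homomorphism whose range is the commutant of {P_V π(g) P_V* : g ∈ G} in B(V). In particular, if the positive-definite function π_V(g) = P_V π(g) P_V* has irreducible commutant (i.e., π_V(G)' = ℂ·1), then π is irreducible. -/
/-!
An intertwiner `A` is determined by its values on `V`, since the translates `π(g)V` span a dense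
subspace; as `A` and `A*` both preserve `V`, compression by `P_V` is multiplicative on `π(G)'`.

For surjectivity, given `T` commuting with every `P_V π(g) P_V`, one defines
`A (∑ π(g) v_g) = ∑ π(g) (T v_g)` on the span of the translates and extends by continuity. The
required bound `‖∑ π(g) (T v_g)‖ ≤ ‖T‖ ‖∑ π(g) v_g‖` holds because the Gram form
`⟪∑ π(g) v_g, ∑ π(h) w_h⟫ = ∑ ⟪P_V π(h⁻¹g) v_g, w_h⟫` lets every operator `S` on `V` commuting with
the `P_V π(g) P_V` move across with adjoint `S*`. Taking `S = (‖T‖² - T*T)^{1/2}`, which lies in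
that commutant, the squared norms of `∑ π(g) (T v_g)` and `∑ π(g) (S v_g)` add up to
`‖T‖² ‖∑ π(g) v_g‖²`.
-/

open scoped ComplexInnerProductSpace

lemma CStarAlgebra.exists_star_mul_self_eq_algebraMap_norm_sq_sub {A : Type*} [CStarAlgebra A]
    [PartialOrder A] [StarOrderedRing A] (a : A) :
    ∃ s : A, star s * s = algebraMap ℝ A (‖a‖ ^ 2) - star a * a ∧
      ∀ b : A, Commute (star a * a) b → Commute s b := by
  have hnonneg : 0 ≤ algebraMap ℝ A (‖a‖ ^ 2) - star a * a :=
    sub_nonneg.2 CStarAlgebra.star_mul_le_algebraMap_norm_sq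
  refine ⟨CFC.sqrt (algebraMap ℝ A (‖a‖ ^ 2) - star a * a), ?_, fun b hb => ?_⟩
  · rw [(CFC.sqrt_nonneg _).isSelfAdjoint.star_eq, CFC.sqrt_mul_sqrt_self _ hnonneg]
  · exact ((Algebra.commute_algebraMap_left _ b).sub_left hb).cfcₙ_nnreal _

section Compression

variable {𝕜 H : Type*} [RCLike 𝕜] [NormedAddCommGroup H] [InnerProductSpace 𝕜 H]
  (V : Submodule 𝕜 H) [V.HasOrthogonalProjection]

/-- The compression `γ(A) = P_V A P_V*`, as an operator on `V`. -/
noncomputable def compress (A : H →L[𝕜] H) : V →L[𝕜] V :=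
  V.orthogonalProjectionOnto.comp (A.comp V.subtypeL)

lemma compress_apply (A : H →L[𝕜] H) (v : V) :
    compress V A v = V.orthogonalProjectionOnto (A v) :=
  rfl

variable {V}

lemma coe_compress_apply_of_mem {A : H →L[𝕜] H} {v : V} (hv : A v ∈ V) :
    (compress V A v : H) = A v :=
  Submodule.starProjection_eq_self_iff.2 hv

lemma inner_coe_compress_apply (A : H →L[𝕜] H) (v w : V) :
    inner 𝕜 (compress V A v : H) w = inner 𝕜 (A v) (w : H) :=
  Submodule.inner_orthogonalProjectionOnto_eq_of_mem_right w (A v)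

lemma compress_mul_of_mapsTo (A : H →L[𝕜] H) {B : H →L[𝕜] H} (hB : ∀ v ∈ V, B v ∈ V) :
    compress V (A * B) = compress V A * compress V B := by
  ext1 v
  rw [mul_apply_eq_comp, compress_apply, compress_apply,
    coe_compress_apply_of_mem (hB v v.2), mul_apply_eq_comp]

lemma compress_smul_one (c : 𝕜) : compress V (c • 1) = c • 1 := by
  ext1 v
  simp [compress_apply]

variable [CompleteSpace H] [CompleteSpace V]

lemma compress_star (A : H →L[𝕜] H) : compress V (star A) = star (compress V A) := by
  simp only [compress, ContinuousLinearMap.star_eq_adjoint, ContinuousLinearMap.adjoint_comp,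
    Submodule.adjoint_orthogonalProjectionOnto, Submodule.adjoint_subtypeL,
    ContinuousLinearMap.comp_assoc]

lemma compress_mul_of_star_mapsTo {A : H →L[𝕜] H} (B : H →L[𝕜] H)
    (hA : ∀ v ∈ V, star A v ∈ V) :
    compress V (A * B) = compress V A * compress V B := by
  apply star_injective
  rw [← compress_star, star_mul, compress_mul_of_mapsTo _ hA, compress_star, compress_star]
  exact (star_mul (compress V A) (compress V B)).symm

lemma Commute.compress {A B : H →L[𝕜] H} (h : Commute A B) (hA : ∀ v ∈ V, A v ∈ V)
    (hA' : ∀ v ∈ V, star A v ∈ V) : Commute (compress V A) (compress V B) := by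
  rw [Commute, SemiconjBy, ← compress_mul_of_star_mapsTo B hA', h.eq,
    compress_mul_of_mapsTo B hA]

end Compression

lemma star_coe_map_unitary {G R : Type*} [Group G] [Monoid R] [StarMul R] (π : G →* unitary R)
    (g : G) : star (π g : R) = π g⁻¹ := by
  rw [← Unitary.coe_star, Unitary.star_eq_inv, map_inv]

section UnitaryRepresentation

variable {G : Type*} [Group G] {H : Type*} [NormedAddCommGroup H] [InnerProductSpace ℂ H]
  [CompleteSpace H] (π : G →* unitary (H →L[ℂ] H))

lemma inner_map_unitary_apply (g h : G) (x y : H) :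
    ⟪(π g : H →L[ℂ] H) x, (π h : H →L[ℂ] H) y⟫ = ⟪(π (h⁻¹ * g) : H →L[ℂ] H) x, y⟫ := by
  rw [← ContinuousLinearMap.adjoint_inner_left (π h : H →L[ℂ] H),
    ← ContinuousLinearMap.star_eq_adjoint, star_coe_map_unitary, map_mul, Submonoid.coe_mul,
    mul_apply_eq_comp]

lemma commute_star_of_forall_commute {A : H →L[ℂ] H} (hA : ∀ g, Commute A (π g : H →L[ℂ] H))
    (g : G) : Commute (star A) (π g : H →L[ℂ] H) := by
  simpa only [star_coe_map_unitary, inv_inv] using (hA g⁻¹).star_star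

variable (V : Submodule ℂ H)

noncomputable def translateSum : (G →₀ V) →ₗ[ℂ] H :=
  Finsupp.lsum ℂ fun g => ((π g : H →L[ℂ] H).comp V.subtypeL : V →ₗ[ℂ] H)

lemma translateSum_apply (f : G →₀ V) :
    translateSum π V f = f.sum fun g v => (π g : H →L[ℂ] H) v :=
  Finsupp.lsum_apply ..

lemma translateSum_single (g : G) (v : V) :
    translateSum π V (Finsupp.single g v) = (π g : H →L[ℂ] H) v := by
  simp [translateSum_apply]

lemma range_translateSum :
    LinearMap.range (translateSum π V)
      = Submodule.span ℂ (⋃ g : G, (π g : H →L[ℂ] H) '' V) := by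
  apply le_antisymm
  · rintro _ ⟨f, rfl⟩
    rw [translateSum_apply]
    exact Submodule.sum_mem _ fun g _ =>
      Submodule.subset_span (Set.mem_iUnion.2 ⟨g, Set.mem_image_of_mem _ (f g).2⟩)
  · rw [Submodule.span_le]
    rintro _ ⟨_, ⟨g, rfl⟩, v, hv, rfl⟩
    exact ⟨Finsupp.single g ⟨v, hv⟩, translateSum_single π V g ⟨v, hv⟩⟩

variable [CompleteSpace V]

lemma star_compress_map_unitary (g : G) :
    star (compress V (π g : H →L[ℂ] H)) = compress V (π g⁻¹ : H →L[ℂ] H) := by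
  rw [← compress_star, star_coe_map_unitary]

lemma eq_of_compress_eq
    (hgen : Dense (Submodule.span ℂ (⋃ g : G, (π g : H →L[ℂ] H) '' V) : Set H))
    {A B : H →L[ℂ] H} (hA : ∀ g, Commute A (π g : H →L[ℂ] H))
    (hB : ∀ g, Commute B (π g : H →L[ℂ] H)) (hAV : ∀ v ∈ V, A v ∈ V) (hBV : ∀ v ∈ V, B v ∈ V)
    (h : compress V A = compress V B) : A = B := by
  refine ContinuousLinearMap.ext_on hgen ?_
  rintro _ ⟨_, ⟨g, rfl⟩, v, hv, rfl⟩
  have hAB : A v = B v := by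
    rw [← coe_compress_apply_of_mem (v := ⟨v, hv⟩) (hAV v hv),
      ← coe_compress_apply_of_mem (v := ⟨v, hv⟩) (hBV v hv), h]
  simp only [← mul_apply_eq_comp, (hA g).eq, (hB g).eq]
  rw [mul_apply_eq_comp, mul_apply_eq_comp, hAB]

lemma inner_translateSum (f f' : G →₀ V) :
    ⟪translateSum π V f, translateSum π V f'⟫ =
      f.sum fun g v => f'.sum fun h w => ⟪compress V (π (h⁻¹ * g) : H →L[ℂ] H) v, w⟫ := by
  simp only [translateSum_apply, Finsupp.sum, sum_inner]
  refine Finset.sum_congr rfl fun g _ => ?_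
  simp only [inner_sum, inner_map_unitary_apply, Submodule.coe_inner, inner_coe_compress_apply]

lemma inner_translateSum_smul_left {S : V →L[ℂ] V}
    (hS : ∀ g, Commute S (compress V (π g : H →L[ℂ] H))) (f f' : G →₀ V) :
    ⟪translateSum π V (S • f), translateSum π V f'⟫ =
      ⟪translateSum π V f, translateSum π V (star S • f')⟫ := by
  rw [inner_translateSum, inner_translateSum, Finsupp.sum_smul_index' (fun _ => by simp)]
  refine Finsupp.sum_congr fun g _ => ?_
  rw [Finsupp.sum_smul_index' (fun _ => by simp)]
  refine Finsupp.sum_congr fun h _ => ?_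
  rw [ContinuousLinearMap.smul_def, ContinuousLinearMap.smul_def, ← mul_apply_eq_comp,
    ← (hS _).eq, mul_apply_eq_comp, ContinuousLinearMap.star_eq_adjoint,
    ContinuousLinearMap.adjoint_inner_right]

lemma norm_translateSum_smul_sq {S : V →L[ℂ] V}
    (hS : ∀ g, Commute S (compress V (π g : H →L[ℂ] H))) (f : G →₀ V) :
    ‖translateSum π V (S • f)‖ ^ 2 =
      RCLike.re ⟪translateSum π V f, translateSum π V ((star S * S) • f)⟫ := by
  rw [← inner_self_eq_norm_sq (𝕜 := ℂ), inner_translateSum_smul_left π V hS]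
  congr 3
  exact (mul_smul (star S) S f).symm

lemma norm_translateSum_smul_le {T : V →L[ℂ] V}
    (hT : ∀ g, Commute T (compress V (π g : H →L[ℂ] H))) (f : G →₀ V) :
    ‖translateSum π V (T • f)‖ ≤ ‖T‖ * ‖translateSum π V f‖ := by
  obtain ⟨S, hSS, hS_comm⟩ :=
    CStarAlgebra.exists_star_mul_self_eq_algebraMap_norm_sq_sub (A := V →L[ℂ] V) T
  have hT_star (g : G) : Commute (star T) (compress V (π g : H →L[ℂ] H)) := by
    simpa only [star_compress_map_unitary, inv_inv] using (hT g⁻¹).star_star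
  have hS (g : G) : Commute S (compress V (π g : H →L[ℂ] H)) :=
    hS_comm _ ((hT_star g).mul_left (hT g))
  have hsum : (star T * T) • f + (star S * S) • f = ((‖T‖ ^ 2 : ℝ) : ℂ) • f := by
    ext g
    rw [Finsupp.add_apply, Finsupp.smul_apply, Finsupp.smul_apply, Finsupp.smul_apply,
      ContinuousLinearMap.smul_def, ContinuousLinearMap.smul_def, ← add_apply,
      hSS, add_sub_cancel, Algebra.algebraMap_eq_smul_one]
    rfl
  have hpyth : ‖translateSum π V (T • f)‖ ^ 2 + ‖translateSum π V (S • f)‖ ^ 2 =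
      (‖T‖ * ‖translateSum π V f‖) ^ 2 := by
    rw [norm_translateSum_smul_sq π V hT, norm_translateSum_smul_sq π V hS, ← map_add,
      ← inner_add_right, ← map_add, hsum, map_smul, inner_smul_right, RCLike.re_to_complex,
      Complex.re_ofReal_mul, ← RCLike.re_to_complex, inner_self_eq_norm_sq, mul_pow]
  refine (pow_le_pow_iff_left₀ (norm_nonneg _) (by positivity) two_ne_zero).1 ?_
  rw [← hpyth]
  exact le_add_of_nonneg_right (sq_nonneg _)

lemma exists_apply_map_unitary_eq
    (hgen : Dense (Submodule.span ℂ (⋃ g : G, (π g : H →L[ℂ] H) '' V) : Set H))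
    {T : V →L[ℂ] V} (hT : ∀ g, Commute T (compress V (π g : H →L[ℂ] H))) :
    ∃ A : H →L[ℂ] H, ∀ g (v : V), A ((π g : H →L[ℂ] H) v) = (π g : H →L[ℂ] H) (T v) := by
  let Ψ : (G →₀ V) →ₗ[ℂ] H :=
    translateSum π V ∘ₗ Finsupp.mapRange.linearMap (T : V →ₗ[ℂ] V)
  have hΨ (f : G →₀ V) : Ψ f = translateSum π V (T • f) := rfl
  have hdense : DenseRange (translateSum π V) := by
    rw [DenseRange, ← LinearMap.coe_range, range_translateSum]
    exact hgen
  have hbound : ∃ C, ∀ f, ‖Ψ f‖ ≤ C * ‖translateSum π V f‖ :=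
    ⟨‖T‖, fun f => (hΨ f).symm ▸ norm_translateSum_smul_le π V hT f⟩
  refine ⟨Ψ.extendOfNorm (translateSum π V), fun g v => ?_⟩
  rw [← translateSum_single, LinearMap.extendOfNorm_eq hdense hbound, hΨ, Finsupp.smul_single,
    translateSum_single]
  rfl

lemma exists_commute_compress_eq
    (hgen : Dense (Submodule.span ℂ (⋃ g : G, (π g : H →L[ℂ] H) '' V) : Set H))
    {T : V →L[ℂ] V} (hT : ∀ g, Commute T (compress V (π g : H →L[ℂ] H))) :
    ∃ A : H →L[ℂ] H, (∀ g, Commute A (π g : H →L[ℂ] H)) ∧ compress V A = T := by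
  obtain ⟨A, hA⟩ := exists_apply_map_unitary_eq π V hgen hT
  have hA_one (v : V) : A v = T v := by simpa using hA 1 v
  refine ⟨A, fun g => ContinuousLinearMap.ext_on hgen ?_, ?_⟩
  · rintro _ ⟨_, ⟨h, rfl⟩, v, hv, rfl⟩
    change A ((π g : H →L[ℂ] H) ((π h : H →L[ℂ] H) v)) =
      (π g : H →L[ℂ] H) (A ((π h : H →L[ℂ] H) v))
    have hmul : (π g : H →L[ℂ] H) ((π h : H →L[ℂ] H) v) = (π (g * h) : H →L[ℂ] H) v := by
      rw [map_mul]
      rfl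
    rw [hmul, hA (g * h) ⟨v, hv⟩, hA h ⟨v, hv⟩, map_mul]
    rfl
  · ext1 v
    apply Subtype.ext
    rw [coe_compress_apply_of_mem (by rw [hA_one]; exact (T v).2), hA_one]

end UnitaryRepresentation

/-- Let `(π, H)` be a unitary representation of `G`, `V ⊆ H` a closed subspace
generating `H` as a `G`-module and invariant under the commutant `π(G)'`. Then
`γ(A) = P_V A P_V` is an injective `*`-homomorphism from `π(G)'` onto the commutant of
`π_V(G) = {P_V π(g) P_V*}` in `B(V)`. In particular, if `π_V(G)' = ℂ·1`, then `π` is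
irreducible. -/
theorem stmt_19 {G : Type*} [Group G] {H : Type*} [NormedAddCommGroup H]
    [InnerProductSpace ℂ H] [CompleteSpace H]
    (π : G →* unitary (H →L[ℂ] H))
    (V : Submodule ℂ H) [CompleteSpace V]
    (hgen : (Submodule.span ℂ
        (⋃ g : G, ((π g : H →L[ℂ] H)) '' (V : Set H))).topologicalClosure = ⊤)
    (hinv : ∀ A : H →L[ℂ] H,
      (∀ g : G, A * (π g : H →L[ℂ] H) = (π g : H →L[ℂ] H) * A) →
      ∀ v ∈ V, A v ∈ V) :
    -- γ is injective on the commutant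
    (∀ A B : H →L[ℂ] H,
      (∀ g : G, A * (π g : H →L[ℂ] H) = (π g : H →L[ℂ] H) * A) →
      (∀ g : G, B * (π g : H →L[ℂ] H) = (π g : H →L[ℂ] H) * B) →
      (V.orthogonalProjectionOnto).comp (A.comp V.subtypeL) =
        (V.orthogonalProjectionOnto).comp (B.comp V.subtypeL) → A = B) ∧
    -- γ is a *-homomorphism on the commutant
    (∀ A B : H →L[ℂ] H,
      (∀ g : G, A * (π g : H →L[ℂ] H) = (π g : H →L[ℂ] H) * A) →
      (∀ g : G, B * (π g : H →L[ℂ] H) = (π g : H →L[ℂ] H) * B) →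
      (V.orthogonalProjectionOnto).comp ((A * B).comp V.subtypeL) =
        ((V.orthogonalProjectionOnto).comp (A.comp V.subtypeL)) *
          ((V.orthogonalProjectionOnto).comp (B.comp V.subtypeL)) ∧
      (V.orthogonalProjectionOnto).comp ((star A).comp V.subtypeL) =
        star ((V.orthogonalProjectionOnto).comp (A.comp V.subtypeL))) ∧
    -- the range of γ is the commutant of π_V(G)
    (∀ T : V →L[ℂ] V,
      (∀ g : G, T * ((V.orthogonalProjectionOnto).comp ((π g : H →L[ℂ] H).comp V.subtypeL)) =
        ((V.orthogonalProjectionOnto).comp ((π g : H →L[ℂ] H).comp V.subtypeL)) * T) ↔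
      (∃ A : H →L[ℂ] H,
        (∀ g : G, A * (π g : H →L[ℂ] H) = (π g : H →L[ℂ] H) * A) ∧
        (V.orthogonalProjectionOnto).comp (A.comp V.subtypeL) = T)) ∧
    -- irreducibility criterion
    ((∀ T : V →L[ℂ] V,
        (∀ g : G, T * ((V.orthogonalProjectionOnto).comp ((π g : H →L[ℂ] H).comp V.subtypeL)) =
          ((V.orthogonalProjectionOnto).comp ((π g : H →L[ℂ] H).comp V.subtypeL)) * T) →
        ∃ c : ℂ, T = c • 1) →
      ∀ A : H →L[ℂ] H,
        (∀ g : G, A * (π g : H →L[ℂ] H) = (π g : H →L[ℂ] H) * A) →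
        ∃ c : ℂ, A = c • 1) := by
  have hdense : Dense (Submodule.span ℂ (⋃ g : G, (π g : H →L[ℂ] H) '' V) : Set H) :=
    Submodule.dense_iff_topologicalClosure_eq_top.2 hgen
  have hstar_inv (A : H →L[ℂ] H) (hA : ∀ g, Commute A (π g : H →L[ℂ] H)) :
      ∀ v ∈ V, star A v ∈ V :=
    hinv _ (commute_star_of_forall_commute π hA)
  have hcompress_comm (A : H →L[ℂ] H) (hA : ∀ g, Commute A (π g : H →L[ℂ] H)) (g : G) :
      Commute (compress V A) (compress V (π g : H →L[ℂ] H)) :=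
    (hA g).compress (hinv A hA) (hstar_inv A hA)
  have hinj (A B : H →L[ℂ] H) (hA : ∀ g, Commute A (π g : H →L[ℂ] H))
      (hB : ∀ g, Commute B (π g : H →L[ℂ] H)) (h : compress V A = compress V B) : A = B :=
    eq_of_compress_eq π V hdense hA hB (hinv A hA) (hinv B hB) h
  refine ⟨hinj, fun A B _ hB => ⟨compress_mul_of_mapsTo A (hinv B hB), compress_star A⟩,
    fun T => ⟨exists_commute_compress_eq π V hdense, ?_⟩, fun hirr A hA => ?_⟩
  · rintro ⟨A, hA, rfl⟩
    exact hcompress_comm A hA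
  · obtain ⟨c, hc⟩ := hirr (compress V A) (hcompress_comm A hA)
    have hc_comm (g : G) : Commute (c • 1 : H →L[ℂ] H) (π g : H →L[ℂ] H) :=
      (Commute.one_left _).smul_left c
    exact ⟨c, hinj A (c • 1) hA hc_comm (by rw [hc, compress_smul_one])⟩
end
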